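/- For a cyclic group C_n, the Frobenius–Schur exponent of Vec_{C_n}^ω, given by lcm{|g|·|ω_g| : g ∈ C_n}, equals n² if and only if ω is a generator of H³(C_n, C^×) ≅ C_n; here |ω_g| denotes the order of the restriction of ω to the subgroup generated by g. -/

import Mathlib

/-!
The order `d / gcd d k` of the class `k` restricted to a subgroup of order `d` is the additive
order of the image of `k` under the reduction `ZMod n → ZMod d`, so it divides the order
`n / gcd n k` of `k` itself. Hence the term `d * (d / gcd d k)` is monotone for divisibility
in `d`, and the lcm over all divisors is attained at `d = n`.
-/

theorem Nat.div_gcd_dvd_div_gcd_of_dvd {d n : ℕ} (k : ℕ) (hdn : d ∣ n) (hn : n ≠ 0) :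
    d / d.gcd k ∣ n / n.gcd k := by
  have hd : d ≠ 0 := ne_zero_of_dvd_ne_zero hn hdn
  rw [← ZMod.addOrderOf_coe k hd, ← ZMod.addOrderOf_coe k hn,
    ← map_natCast (ZMod.castHom hdn (ZMod d)) k]
  exact addOrderOf_map_dvd (ZMod.castHom hdn (ZMod d)).toAddMonoidHom _

theorem Nat.lcm_divisors_eq_apply_self {n : ℕ} {f : ℕ → ℕ} (hn : n ≠ 0)
    (hf : ∀ d, d ∣ n → f d ∣ f n) : n.divisors.lcm f = f n :=
  Nat.dvd_antisymm (Finset.lcm_dvd fun d hd => hf d (Nat.dvd_of_mem_divisors hd))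
    (Finset.dvd_lcm (Nat.mem_divisors_self n hn))

theorem Nat.mul_div_gcd_eq_sq_iff {n : ℕ} (k : ℕ) (hn : n ≠ 0) :
    n * (n / n.gcd k) = n ^ 2 ↔ n.gcd k = 1 := by
  rw [sq, Nat.mul_right_inj hn, Nat.div_eq_self]
  exact or_iff_right hn

/-- Modeling `H³(C_n, ℂˣ) ≅ ℤ/n` by `k`, the restriction of the class `k` to the
subgroup of order `d ∣ n` has order `d / gcd d k`, so
`|g|·|ω_g| = d * (d / gcd d k)` for an element `g` of order `d`. -/
theorem stmt_13 (n : ℕ) (hn : 1 ≤ n) (k : ℕ) :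
    Finset.lcm (Nat.divisors n) (fun d => d * (d / Nat.gcd d k)) =
        n * (n / Nat.gcd n k) ∧
      (Finset.lcm (Nat.divisors n) (fun d => d * (d / Nat.gcd d k)) = n ^ 2 ↔
        Nat.gcd n k = 1) := by
  have hn0 : n ≠ 0 := Nat.one_le_iff_ne_zero.mp hn
  have hlcm : (Nat.divisors n).lcm (fun d => d * (d / d.gcd k)) = n * (n / n.gcd k) :=
    Nat.lcm_divisors_eq_apply_self hn0 fun d hd =>
      mul_dvd_mul hd (Nat.div_gcd_dvd_div_gcd_of_dvd k hd hn0)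
  rw [hlcm]
  exact ⟨rfl, Nat.mul_div_gcd_eq_sq_iff k hn0⟩
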